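/- (Example 4.3: the μ_D-Harder-Narasimhan filtration oscillates as D grows.) With ι = ℤ, h ≡ 1, and θ given by θ(−1) = θ(−2) = 1, θ(0) = θ(1) = −1, θ(2) = −2, and for k ≥ 3: θ(k) = 2^{(1−k)/2} if k is odd and θ(k) = 0 if k is even, θ(−k) = 2^{(2−k)/2} if k is even and θ(−k) = 0 if k is odd, one has: (i) θ is a stability function for h (so D₋ = {0,1,2}); (ii) for h₁ the indicator of {r ≥ 2} and h₂ the indicator of {r ≥ 1}, μ_θ(h₁) = μ_θ(h₂) = 1 > 0 = μ_θ(h); (iii) for every N ≥ 1 the sets E_N := {−2N−2, …, 2N+2} and O_N := {−2N−3, …, 2N+3} are admissible and μ_{E_N}(h₁) = 1 + 2^{−N}/(2N+1), μ_{E_N}(h₂) = 1 + 2^{−N−1}/(2N+1), μ_{O_N}(h₁) = 1 + 2^{−N−1}·(1−2N)/(4N+4), μ_{O_N}(h₂) = 1 + 2^{−N−2}·(1−2N)/(4N+4); in particular μ_{E_N}(h₁) > μ_{E_N}(h₂) > 0 while 0 < μ_{O_N}(h₁) < μ_{O_N}(h₂), so the relative order of the two D-slopes flips infinitely often as D grows.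 -/

import Mathlib

open scoped BigOperators

noncomputable section

/-- The value `θ(h') = ∑_ρ θ(ρ)·h'(ρ)` of a stability function on a Hilbert function. -/
def thetaVal {ι : Type*} (θ : ι → ℚ) (h' : ι → ℕ) : ℝ :=
  ∑' ρ : ι, (θ ρ : ℝ) * (h' ρ : ℝ)

/-- `r(h') = ∑_{ρ ∈ D₋} h'(ρ)`, the sum of the multiplicities over the negative part
`D₋ = {ρ | θ ρ < 0}`. -/
def rkNeg {ι : Type*} (θ : ι → ℚ) (h' : ι → ℕ) : ℝ :=
  ∑' ρ : {ρ : ι // θ ρ < 0}, (h' ρ.1 : ℝ)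

/-- The θ-slope `μ_θ(h') = −θ(h')/r(h')`. -/
def muTheta {ι : Type*} (θ : ι → ℚ) (h' : ι → ℕ) : ℝ :=
  -thetaVal θ h' / rkNeg θ h'

/-- `θ` is a stability function for the Hilbert function `h`: `D₋ = {θ < 0}` is finite,
`D₊ = {θ > 0}` is infinite, `θ` vanishes where `h` does, and `ρ ↦ θ(ρ)·h(ρ)` is summable
with sum `0`. -/
structure IsStabilityFunction {ι : Type*} (h : ι → ℕ) (θ : ι → ℚ) : Prop where
  finite_neg : {ρ : ι | θ ρ < 0}.Finite
  infinite_pos : {ρ : ι | 0 < θ ρ}.Infinite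
  theta_eq_zero_of_h_eq_zero : ∀ ρ, h ρ = 0 → θ ρ = 0
  summable : Summable fun ρ : ι => (θ ρ : ℝ) * (h ρ : ℝ)
  thetaVal_eq_zero : thetaVal θ h = 0

/-- `D` is an admissible finite subset: `D₋ ⊆ D ⊆ supp h` and `D ∩ D₊ ≠ ∅`. -/
def Admissible {ι : Type*} (h : ι → ℕ) (θ : ι → ℚ) (D : Finset ι) : Prop :=
  {ρ : ι | θ ρ < 0} ⊆ (D : Set ι) ∧ (D : Set ι) ⊆ {ρ : ι | h ρ ≠ 0} ∧ ∃ ρ ∈ D, 0 < θ ρ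

/-- `S_D = ∑_{ρ ∉ D} θ(ρ)·h(ρ)`. -/
def SD {ι : Type*} (h : ι → ℕ) (θ : ι → ℚ) (D : Finset ι) : ℝ :=
  ∑' ρ : {ρ : ι // ρ ∉ D}, (θ ρ.1 : ℝ) * (h ρ.1 : ℝ)

/-- The finite set `D \ D₋`. -/
def DsubNeg {ι : Type*} (θ : ι → ℚ) (D : Finset ι) : Finset ι :=
  D.filter fun ρ => 0 ≤ θ ρ

/-- `d = card (D \ D₋)`. -/
def dD {ι : Type*} (θ : ι → ℚ) (D : Finset ι) : ℕ :=
  (DsubNeg θ D).card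

/-- The D-slope
`μ_D(h') = (−1/r(h'))·( ∑_{ρ∈D} θ(ρ)h'(ρ) + (S_D/d)·∑_{ρ∈D∖D₋} h'(ρ)/h(ρ) )`. -/
def muD {ι : Type*} (h : ι → ℕ) (θ : ι → ℚ) (D : Finset ι) (h' : ι → ℕ) : ℝ :=
  (-1 / rkNeg θ h') *
    ((∑ ρ ∈ D, (θ ρ : ℝ) * (h' ρ : ℝ)) +
      (SD h θ D / (dD θ D : ℝ)) * ∑ ρ ∈ DsubNeg θ D, (h' ρ : ℝ) / (h ρ : ℝ))

/-- The Hilbert function `h ≡ 1` of `𝒪_X` for `X = Spec ℂ[x,y]/(xy)`. -/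
def hEx : ℤ → ℕ := fun _ => 1

/-- The stability function of Example 4.3: `θ(−1) = θ(−2) = 1`, `θ(0) = θ(1) = −1`,
`θ(2) = −2`, and for `k ≥ 3`: `θ(k) = 2^{(1−k)/2}` if `k` is odd, `0` if even;
`θ(−k) = 2^{(2−k)/2}` if `k` is even, `0` if odd. -/
def θEx : ℤ → ℚ := fun r =>
  if r = -1 ∨ r = -2 then 1
  else if r = 0 ∨ r = 1 then -1
  else if r = 2 then -2
  else if 3 ≤ r then (if Odd r then (2 : ℚ) ^ ((1 - r) / 2) else 0)
  else (if Even r then (2 : ℚ) ^ ((2 + r) / 2) else 0)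

/-- The Hilbert function of the submodule `(x̄²)`: the indicator of `{r : ℤ | r ≥ 2}`. -/
def hSub₁ : ℤ → ℕ := fun r => if 2 ≤ r then 1 else 0

/-- The Hilbert function of the submodule `(x̄)`: the indicator of `{r : ℤ | r ≥ 1}`. -/
def hSub₂ : ℤ → ℕ := fun r => if 1 ≤ r then 1 else 0


lemma θEx_odd_ge3 {r : ℤ} (h3 : 3 ≤ r) (ho : Odd r) : θEx r = 2 ^ ((1 - r) / 2) := by
  unfold θEx
  rw [if_neg (by omega), if_neg (by omega), if_neg (by omega), if_pos h3, if_pos ho]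

lemma θEx_even_ge3 {r : ℤ} (h3 : 3 ≤ r) (ho : ¬ Odd r) : θEx r = 0 := by
  unfold θEx
  rw [if_neg (by omega), if_neg (by omega), if_neg (by omega), if_pos h3, if_neg ho]

lemma θEx_even_le3 {r : ℤ} (h3 : r ≤ -3) (he : Even r) : θEx r = 2 ^ ((2 + r) / 2) := by
  unfold θEx
  rw [if_neg (by omega), if_neg (by omega), if_neg (by omega), if_neg (by omega), if_pos he]

lemma θEx_odd_le3 {r : ℤ} (h3 : r ≤ -3) (he : ¬ Even r) : θEx r = 0 := by
  unfold θEx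
  rw [if_neg (by omega), if_neg (by omega), if_neg (by omega), if_neg (by omega), if_neg he]

lemma θEx_neg_iff (r : ℤ) : θEx r < 0 ↔ r = 0 ∨ r = 1 ∨ r = 2 := by
  constructor
  · intro h
    by_contra hc
    push_neg at hc
    obtain ⟨h0, h1, h2⟩ := hc
    rcases le_or_gt 3 r with h3 | h3
    · by_cases ho : Odd r
      · rw [θEx_odd_ge3 h3 ho] at h
        exact absurd h (not_lt.mpr (zpow_pos (by norm_num) _).le)
      · rw [θEx_even_ge3 h3 ho] at h; norm_num at h
    · rcases le_or_gt r (-3) with h4 | h4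
      · by_cases he : Even r
        · rw [θEx_even_le3 h4 he] at h
          exact absurd h (not_lt.mpr (zpow_pos (by norm_num) _).le)
        · rw [θEx_odd_le3 h4 he] at h; norm_num at h
      · -- r ∈ {-2,-1}
        have : r = -1 ∨ r = -2 := by omega
        unfold θEx at h
        rw [if_pos this] at h; norm_num at h
  · intro h
    unfold θEx
    rcases h with h | h | h <;> subst h <;> norm_num

lemma θEx_n2 : θEx (-2) = 1 := by norm_num [θEx]
lemma θEx_n1 : θEx (-1) = 1 := by norm_num [θEx]
lemma θEx_0 : θEx 0 = -1 := by norm_num [θEx]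
lemma θEx_1 : θEx 1 = -1 := by norm_num [θEx]
lemma θEx_2 : θEx 2 = -2 := by norm_num [θEx]
lemma θEx_n3 : θEx (-3) = 0 := θEx_odd_le3 (by norm_num) (by rw [Int.even_iff]; decide)

def FEx : ℤ → ℝ := fun r => (θEx r : ℝ)

lemma hasSum_congr' {ι : Type*} {f g : ι → ℝ} {a : ℝ} (hf : HasSum f a) (h : ∀ x, f x = g x) :
    HasSum g a := (funext h : f = g) ▸ hf

lemma hasSum_geo (m : ℤ) : HasSum (fun n : ℕ => (2:ℝ) ^ (-(n:ℤ) - m - 1)) ((2:ℝ) ^ (-m)) := by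
  have h := (hasSum_geometric_of_lt_one (by norm_num : (0:ℝ) ≤ 1/2) (by norm_num)).mul_left
    ((2:ℝ) ^ (-m-1))
  have hv : (2:ℝ) ^ (-m-1) * (1 - 1/2)⁻¹ = (2:ℝ) ^ (-m) := by
    rw [show (-m : ℤ) = -m-1+1 by ring, zpow_add_one₀ (two_ne_zero)]
    norm_num
  rw [hv] at h
  apply hasSum_congr' h
  intro n
  rw [show (-(n:ℤ) - m - 1) = (-m-1) + (-(n:ℤ)) by ring, zpow_add₀ (two_ne_zero)]
  congr 1
  rw [zpow_neg, zpow_natCast, one_div, inv_pow]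

lemma hasSum_tailP (m : ℤ) (hm : 0 ≤ m) :
    HasSum (fun r : ℤ => if 2*m+3 ≤ r then FEx r else 0) ((2:ℝ) ^ (-m)) := by
  set f : ℤ → ℝ := fun r => if 2*m+3 ≤ r then FEx r else 0 with hf
  have hg : Function.Injective (fun n : ℕ => 2*(n:ℤ) + 2*m + 3) := by
    intro a b hab; simp only at hab; omega
  have hvan : ∀ x ∉ Set.range (fun n : ℕ => 2*(n:ℤ) + 2*m + 3), f x = 0 := by
    intro x hx
    by_cases hle : 2*m+3 ≤ x
    · by_cases ho : Odd x
      · obtain ⟨k, hk⟩ := ho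
        exact absurd ⟨(k-m-1).toNat, by simp only; omega⟩ hx
      · simp only [hf, if_pos hle, FEx, θEx_even_ge3 (by omega) ho, Rat.cast_zero]
    · exact if_neg hle
  rw [← Function.Injective.hasSum_iff hg hvan]
  apply hasSum_congr' (hasSum_geo m)
  intro n
  simp only [Function.comp, hf, FEx]
  rw [if_pos (by omega : 2*m+3 ≤ 2*(n:ℤ) + 2*m + 3),
    θEx_odd_ge3 (by omega) ⟨n+m+1, by ring⟩,
    show (1 - (2*(n:ℤ) + 2*m + 3)) / 2 = -(n:ℤ) - m - 1 by omega]
  push_cast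
  ring

lemma hasSum_tailN (m : ℤ) (hm : 0 ≤ m) :
    HasSum (fun r : ℤ => if r ≤ -(2*m+4) then FEx r else 0) ((2:ℝ) ^ (-m)) := by
  set f : ℤ → ℝ := fun r => if r ≤ -(2*m+4) then FEx r else 0 with hf
  have hg : Function.Injective (fun n : ℕ => -(2*(n:ℤ) + 2*m + 4)) := by
    intro a b hab; simp only [neg_inj] at hab; omega
  have hvan : ∀ x ∉ Set.range (fun n : ℕ => -(2*(n:ℤ) + 2*m + 4)), f x = 0 := by
    intro x hx
    by_cases hle : x ≤ -(2*m+4)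
    · by_cases he : Even x
      · obtain ⟨k, hk⟩ := he
        exact absurd ⟨(-k-m-2).toNat, by simp only; omega⟩ hx
      · simp only [hf, if_pos hle, FEx, θEx_odd_le3 (by omega) he, Rat.cast_zero]
    · exact if_neg hle
  rw [← Function.Injective.hasSum_iff hg hvan]
  apply hasSum_congr' (hasSum_geo m)
  intro n
  simp only [Function.comp, hf, FEx]
  rw [if_pos (by omega : -(2*(n:ℤ) + 2*m + 4) ≤ -(2*m+4)),
    θEx_even_le3 (by omega) ⟨-(n+m+2), by ring⟩,
    show (2 + -(2*(n:ℤ) + 2*m + 4)) / 2 = -(n:ℤ) - m - 1 by omega]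
  push_cast
  ring
lemma F_odd_neg {r : ℤ} (h3 : r ≤ -3) (he : ¬ Even r) : FEx r = 0 := by
  simp [FEx, θEx_odd_le3 h3 he]

lemma F_even_pos {r : ℤ} (h3 : 3 ≤ r) (ho : ¬ Odd r) : FEx r = 0 := by
  simp [FEx, θEx_even_ge3 h3 ho]

lemma hasSum_F : HasSum FEx 0 := by
  have hM : HasSum (fun r : ℤ => if -3 ≤ r ∧ r ≤ 2 then FEx r else 0) (-2) := by
    have h := hasSum_sum_of_ne_finset_zero (L := SummationFilter.unconditional ℤ) (s := ({-3,-2,-1,0,1,2} : Finset ℤ))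
      (f := fun r : ℤ => if -3 ≤ r ∧ r ≤ 2 then FEx r else 0) ?_
    · convert h using 1
      norm_num [Finset.sum_insert, Finset.mem_insert, FEx,
        θEx_n3, θEx_n2, θEx_n1, θEx_0, θEx_1, θEx_2]
    · intro b hb
      simp only [Finset.mem_insert, Finset.mem_singleton] at hb
      exact if_neg (by omega)
  have h := ((hasSum_tailP 0 le_rfl).add (hasSum_tailN 0 le_rfl)).add hM
  norm_num at h
  apply hasSum_congr' h
  intro r
  by_cases h1 : (3:ℤ) ≤ r
  · rw [if_pos (by omega : (3:ℤ) ≤ r), if_neg (by omega : ¬ r ≤ -(4:ℤ)),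
      if_neg (by omega : ¬ (-3 ≤ r ∧ r ≤ 2))]
    ring
  · by_cases h2 : r ≤ -4
    · rw [if_neg (by omega : ¬ (3:ℤ) ≤ r), if_pos (by omega : r ≤ -(4:ℤ)),
        if_neg (by omega : ¬ (-3 ≤ r ∧ r ≤ 2))]
      ring
    · rw [if_neg (by omega : ¬ (3:ℤ) ≤ r), if_neg (by omega : ¬ r ≤ -(4:ℤ)),
        if_pos (by omega : (-3 ≤ r ∧ r ≤ 2))]
      ring

lemma hasSum_Fh1 : HasSum (fun r : ℤ => FEx r * (hSub₁ r : ℝ)) (-1) := by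
  have h := (hasSum_tailP 0 le_rfl).add (hasSum_ite_eq (2:ℤ) (-2:ℝ))
  norm_num at h
  apply hasSum_congr' h
  intro r
  by_cases h1 : (3:ℤ) ≤ r
  · rw [if_pos (by omega : (3:ℤ) ≤ r), if_neg (by omega : r ≠ 2)]
    simp [hSub₁, (by omega : (2:ℤ) ≤ r)]
  · by_cases h2 : r = 2
    · subst h2
      rw [if_neg (by omega), if_pos rfl]
      simp [hSub₁, FEx, θEx_2]
    · rw [if_neg (by omega : ¬ (3:ℤ) ≤ r), if_neg h2]
      simp only [hSub₁]
      rw [if_neg (by omega : ¬ (2:ℤ) ≤ r)]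
      simp

lemma hasSum_Fh2 : HasSum (fun r : ℤ => FEx r * (hSub₂ r : ℝ)) (-2) := by
  have h := ((hasSum_tailP 0 le_rfl).add (hasSum_ite_eq (2:ℤ) (-2:ℝ))).add
    (hasSum_ite_eq (1:ℤ) (-1:ℝ))
  norm_num at h
  apply hasSum_congr' h
  intro r
  by_cases h1 : (3:ℤ) ≤ r
  · rw [if_pos (by omega : (3:ℤ) ≤ r), if_neg (by omega : r ≠ 2), if_neg (by omega : r ≠ 1)]
    simp [hSub₂, (by omega : (1:ℤ) ≤ r)]
  · by_cases h2 : r = 2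
    · subst h2
      rw [if_neg (by omega), if_pos rfl, if_neg (by omega)]
      simp [hSub₂, FEx, θEx_2]
    · by_cases h3 : r = 1
      · subst h3
        rw [if_neg (by omega), if_neg (by omega), if_pos rfl]
        simp [hSub₂, FEx, θEx_1]
      · rw [if_neg (by omega : ¬ (3:ℤ) ≤ r), if_neg h2, if_neg h3]
        simp only [hSub₂]
        rw [if_neg (by omega : ¬ (1:ℤ) ≤ r)]
        simp

/-- tsum over the subtype `{ρ ∉ D}`. -/
lemma tsum_notMem (D : Finset ℤ) (f : ℤ → ℝ) {v : ℝ}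
    (h : HasSum (fun r => if r ∈ D then 0 else f r) v) :
    ∑' ρ : {ρ : ℤ // ρ ∉ D}, f ρ.1 = v := by
  have h2 : ∑' (x : ↑{ρ : ℤ | ρ ∉ D}), f ↑x = v := by
    have hind : ({ρ : ℤ | ρ ∉ D}).indicator f = fun r => if r ∈ D then 0 else f r := by
      funext x
      by_cases hx : x ∈ D <;> simp [Set.indicator_apply, hx]
    rw [tsum_subtype, hind]
    exact h.tsum_eq
  exact h2

lemma sum_D (D : Finset ℤ) (f : ℤ → ℝ) {t v : ℝ} (hf : HasSum f t)
    (h : HasSum (fun r => if r ∈ D then 0 else f r) v) :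
    ∑ ρ ∈ D, f ρ = t - v := by
  have h1 := Summable.sum_add_tsum_compl (s := D) hf.summable
  rw [hf.tsum_eq] at h1
  have h2 : ∑' (x : ↑(↑D : Set ℤ)ᶜ), f ↑x = v := by
    have hind : ((↑D : Set ℤ)ᶜ).indicator f = fun r => if r ∈ D then 0 else f r := by
      funext x
      by_cases hx : x ∈ D <;> simp [Set.indicator_apply, hx]
    rw [tsum_subtype, hind]
    exact h.tsum_eq
  rw [h2] at h1
  linarith

lemma rkNeg_calc (h' : ℤ → ℕ) :
    ∑' ρ : {ρ : ℤ // θEx ρ < 0}, (h' ρ.1 : ℝ) = (h' 0 : ℝ) + (h' 1 : ℝ) + (h' 2 : ℝ) := by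
  have h2 : ∑' (x : ↑{ρ : ℤ | θEx ρ < 0}), (h' ↑x : ℝ) = (h' 0 : ℝ) + (h' 1 : ℝ) + (h' 2 : ℝ) := by
    rw [tsum_subtype {ρ : ℤ | θEx ρ < 0} (fun ρ => (h' ρ : ℝ))]
    have hind : ∀ x : ℤ, ({ρ : ℤ | θEx ρ < 0}).indicator (fun ρ => (h' ρ : ℝ)) x
        = if x = 0 ∨ x = 1 ∨ x = 2 then (h' x : ℝ) else 0 := by
      intro x
      by_cases hx : x = 0 ∨ x = 1 ∨ x = 2 <;>
        simp [Set.indicator_apply, Set.mem_setOf_eq, θEx_neg_iff, hx]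
    rw [tsum_congr hind]
    have h := hasSum_sum_of_ne_finset_zero (L := SummationFilter.unconditional ℤ) (s := ({0,1,2} : Finset ℤ))
      (f := fun x : ℤ => if x = 0 ∨ x = 1 ∨ x = 2 then (h' x : ℝ) else 0) ?_
    · rw [h.tsum_eq]
      norm_num [Finset.sum_insert, Finset.mem_insert]
      ring
    · intro b hb
      simp only [Finset.mem_insert, Finset.mem_singleton] at hb
      exact if_neg (by tauto)
  exact h2

section Windows
variable {N : ℤ} (hN : 1 ≤ N)
include hN

lemma hE_F :
    HasSum (fun r : ℤ => if r ∈ Finset.Icc (-(2*N+2)) (2*N+2) then 0 else FEx r)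
      ((2:ℝ)^(-N) + (2:ℝ)^(-N)) := by
  apply hasSum_congr' ((hasSum_tailP N (by omega)).add (hasSum_tailN N (by omega)))
  intro r
  simp only [Finset.mem_Icc]
  by_cases h1 : 2*N+3 ≤ r
  · rw [if_pos h1, if_neg (by omega), if_neg (by omega)]; ring
  · by_cases h2 : r ≤ -(2*N+4)
    · rw [if_neg h1, if_pos h2, if_neg (by omega)]; ring
    · by_cases h3 : -(2*N+2) ≤ r ∧ r ≤ 2*N+2
      · rw [if_neg h1, if_neg h2, if_pos h3]; ring
      · have hr : r = -(2*N+3) := by omega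
        rw [if_neg h1, if_neg h2, if_neg h3, hr,
          F_odd_neg (by omega) (by rw [Int.even_iff]; omega)]
        ring

lemma hE_F1 :
    HasSum (fun r : ℤ => if r ∈ Finset.Icc (-(2*N+2)) (2*N+2) then 0 else FEx r * (hSub₁ r : ℝ))
      ((2:ℝ)^(-N)) := by
  apply hasSum_congr' (hasSum_tailP N (by omega))
  intro r
  simp only [Finset.mem_Icc, hSub₁]
  by_cases h1 : 2*N+3 ≤ r
  · rw [if_pos h1, if_neg (by omega : ¬ (-(2*N+2) ≤ r ∧ r ≤ 2*N+2)),
      if_pos (by omega : (2:ℤ) ≤ r)]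
    norm_num
  · by_cases h3 : -(2*N+2) ≤ r ∧ r ≤ 2*N+2
    · rw [if_neg h1, if_pos h3]
    · rw [if_neg h1, if_neg h3, if_neg (by omega : ¬ (2:ℤ) ≤ r)]
      norm_num

lemma hE_F2 :
    HasSum (fun r : ℤ => if r ∈ Finset.Icc (-(2*N+2)) (2*N+2) then 0 else FEx r * (hSub₂ r : ℝ))
      ((2:ℝ)^(-N)) := by
  apply hasSum_congr' (hasSum_tailP N (by omega))
  intro r
  simp only [Finset.mem_Icc, hSub₂]
  by_cases h1 : 2*N+3 ≤ r
  · rw [if_pos h1, if_neg (by omega : ¬ (-(2*N+2) ≤ r ∧ r ≤ 2*N+2)),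
      if_pos (by omega : (1:ℤ) ≤ r)]
    norm_num
  · by_cases h3 : -(2*N+2) ≤ r ∧ r ≤ 2*N+2
    · rw [if_neg h1, if_pos h3]
    · rw [if_neg h1, if_neg h3, if_neg (by omega : ¬ (1:ℤ) ≤ r)]
      norm_num

lemma hO_F :
    HasSum (fun r : ℤ => if r ∈ Finset.Icc (-(2*N+3)) (2*N+3) then 0 else FEx r)
      ((2:ℝ)^(-(N+1)) + (2:ℝ)^(-N)) := by
  apply hasSum_congr' ((hasSum_tailP (N+1) (by omega)).add (hasSum_tailN N (by omega)))
  intro r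
  simp only [Finset.mem_Icc]
  by_cases h1 : 2*(N+1)+3 ≤ r
  · rw [if_pos h1, if_neg (by omega), if_neg (by omega)]; ring
  · by_cases h2 : r ≤ -(2*N+4)
    · rw [if_neg h1, if_pos h2, if_neg (by omega)]; ring
    · by_cases h3 : -(2*N+3) ≤ r ∧ r ≤ 2*N+3
      · rw [if_neg h1, if_neg h2, if_pos h3]; ring
      · have hr : r = 2*N+4 := by omega
        rw [if_neg h1, if_neg h2, if_neg h3, hr,
          F_even_pos (by omega) (by rw [Int.odd_iff]; omega)]
        ring

lemma hO_F1 :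
    HasSum (fun r : ℤ => if r ∈ Finset.Icc (-(2*N+3)) (2*N+3) then 0 else FEx r * (hSub₁ r : ℝ))
      ((2:ℝ)^(-(N+1))) := by
  apply hasSum_congr' (hasSum_tailP (N+1) (by omega))
  intro r
  simp only [Finset.mem_Icc, hSub₁]
  by_cases h1 : 2*(N+1)+3 ≤ r
  · rw [if_pos h1, if_neg (by omega : ¬ (-(2*N+3) ≤ r ∧ r ≤ 2*N+3)),
      if_pos (by omega : (2:ℤ) ≤ r)]
    norm_num
  · by_cases h3 : -(2*N+3) ≤ r ∧ r ≤ 2*N+3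
    · rw [if_neg h1, if_pos h3]
    · by_cases h4 : r = 2*N+4
      · rw [if_neg h1, if_neg h3, h4, F_even_pos (by omega) (by rw [Int.odd_iff]; omega)]
        ring
      · rw [if_neg h1, if_neg h3, if_neg (by omega : ¬ (2:ℤ) ≤ r)]
        norm_num

lemma hO_F2 :
    HasSum (fun r : ℤ => if r ∈ Finset.Icc (-(2*N+3)) (2*N+3) then 0 else FEx r * (hSub₂ r : ℝ))
      ((2:ℝ)^(-(N+1))) := by
  apply hasSum_congr' (hasSum_tailP (N+1) (by omega))
  intro r
  simp only [Finset.mem_Icc, hSub₂]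
  by_cases h1 : 2*(N+1)+3 ≤ r
  · rw [if_pos h1, if_neg (by omega : ¬ (-(2*N+3) ≤ r ∧ r ≤ 2*N+3)),
      if_pos (by omega : (1:ℤ) ≤ r)]
    norm_num
  · by_cases h3 : -(2*N+3) ≤ r ∧ r ≤ 2*N+3
    · rw [if_neg h1, if_pos h3]
    · by_cases h4 : r = 2*N+4
      · rw [if_neg h1, if_neg h3, h4, F_even_pos (by omega) (by rw [Int.odd_iff]; omega)]
        ring
      · rw [if_neg h1, if_neg h3, if_neg (by omega : ¬ (1:ℤ) ≤ r)]
        norm_num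

end Windows

lemma DsubNeg_Icc {b : ℤ} (hb : 3 ≤ b) :
    DsubNeg θEx (Finset.Icc (-b) b) = Finset.Icc (-b) b \ {0, 1, 2} := by
  ext r
  simp only [DsubNeg, Finset.mem_filter, Finset.mem_sdiff, Finset.mem_insert,
    Finset.mem_singleton, ← not_lt, θEx_neg_iff]

lemma subset_Icc {b : ℤ} (hb : 3 ≤ b) : ({0, 1, 2} : Finset ℤ) ⊆ Finset.Icc (-b) b := by
  intro x hx
  simp only [Finset.mem_insert, Finset.mem_singleton] at hx
  rw [Finset.mem_Icc]
  omega

lemma card012 : ({0, 1, 2} : Finset ℤ).card = 3 := by norm_num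

lemma toNat_cast {a : ℤ} (ha : 0 ≤ a) : ((a.toNat : ℕ) : ℝ) = (a : ℝ) := by
  exact_mod_cast congrArg (Int.cast : ℤ → ℝ) (Int.toNat_of_nonneg ha)

lemma dD_Icc {b : ℤ} (hb : 3 ≤ b) : ((dD θEx (Finset.Icc (-b) b) : ℕ) : ℝ) = 2*(b:ℝ) - 2 := by
  rw [dD, DsubNeg_Icc hb, Finset.card_sdiff_of_subset (subset_Icc hb), Int.card_Icc, card012]
  rw [show (b + 1 - -b).toNat - 3 = (2*b-2).toNat by omega, toNat_cast (by omega)]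
  push_cast
  ring

lemma count_Icc₁ {b : ℤ} (hb : 3 ≤ b) :
    ∑ ρ ∈ DsubNeg θEx (Finset.Icc (-b) b), ((hSub₁ ρ : ℝ) / (hEx ρ : ℝ)) = (b:ℝ) - 2 := by
  rw [DsubNeg_Icc hb]
  simp only [hEx, hSub₁, Nat.cast_one, div_one, Nat.cast_ite, Nat.cast_zero]
  rw [Finset.sum_boole]
  have he : (Finset.Icc (-b) b \ {0,1,2}).filter (fun r => 2 ≤ r) = Finset.Icc 3 b := by
    ext r
    simp only [Finset.mem_filter, Finset.mem_sdiff, Finset.mem_Icc, Finset.mem_insert,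
      Finset.mem_singleton]
    omega
  rw [he, Int.card_Icc, show (b + 1 - 3).toNat = (b-2).toNat by omega, toNat_cast (by omega)]
  push_cast
  ring

lemma count_Icc₂ {b : ℤ} (hb : 3 ≤ b) :
    ∑ ρ ∈ DsubNeg θEx (Finset.Icc (-b) b), ((hSub₂ ρ : ℝ) / (hEx ρ : ℝ)) = (b:ℝ) - 2 := by
  rw [DsubNeg_Icc hb]
  simp only [hEx, hSub₂, Nat.cast_one, div_one, Nat.cast_ite, Nat.cast_zero]
  rw [Finset.sum_boole]
  have he : (Finset.Icc (-b) b \ {0,1,2}).filter (fun r => 1 ≤ r) = Finset.Icc 3 b := by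
    ext r
    simp only [Finset.mem_filter, Finset.mem_sdiff, Finset.mem_Icc, Finset.mem_insert,
      Finset.mem_singleton]
    omega
  rw [he, Int.card_Icc, show (b + 1 - 3).toNat = (b-2).toNat by omega, toNat_cast (by omega)]
  push_cast
  ring

-- basic values
lemma rk1 : rkNeg θEx hSub₁ = 1 := by
  have h := rkNeg_calc hSub₁
  rw [show ((hSub₁ 0 : ℕ):ℝ) + ((hSub₁ 1 : ℕ):ℝ) + ((hSub₁ 2 : ℕ):ℝ) = 1 by
    norm_num [hSub₁]] at h
  exact h

lemma rk2 : rkNeg θEx hSub₂ = 2 := by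
  have h := rkNeg_calc hSub₂
  rw [show ((hSub₂ 0 : ℕ):ℝ) + ((hSub₂ 1 : ℕ):ℝ) + ((hSub₂ 2 : ℕ):ℝ) = 2 by
    norm_num [hSub₂]] at h
  exact h

lemma rk0 : rkNeg θEx hEx = 3 := by
  have h := rkNeg_calc hEx
  rw [show ((hEx 0 : ℕ):ℝ) + ((hEx 1 : ℕ):ℝ) + ((hEx 2 : ℕ):ℝ) = 3 by
    norm_num [hEx]] at h
  exact h

lemma tv0 : thetaVal θEx hEx = 0 := by
  have h : HasSum (fun r : ℤ => FEx r * (hEx r : ℝ)) 0 :=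
    hasSum_congr' hasSum_F (fun r => by simp [hEx, FEx])
  exact h.tsum_eq

lemma tv1 : thetaVal θEx hSub₁ = -1 := hasSum_Fh1.tsum_eq

lemma tv2 : thetaVal θEx hSub₂ = -2 := hasSum_Fh2.tsum_eq

set_option maxHeartbeats 1000000

/-- Example 4.3: the μ_D-Harder-Narasimhan filtration oscillates as `D` grows; for the
even windows `E_N = {−2N−2,…,2N+2}` one has `μ_{E_N}(h₁) > μ_{E_N}(h₂) > 0`, while for
the odd windows `O_N = {−2N−3,…,2N+3}` one has `0 < μ_{O_N}(h₁) < μ_{O_N}(h₂)`. -/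
theorem example_4_3 :
    IsStabilityFunction hEx θEx ∧
    {ρ : ℤ | θEx ρ < 0} = {0, 1, 2} ∧
    muTheta θEx hSub₁ = 1 ∧ muTheta θEx hSub₂ = 1 ∧ muTheta θEx hEx = 0 ∧
    ∀ N : ℤ, 1 ≤ N →
      Admissible hEx θEx (Finset.Icc (-(2 * N + 2)) (2 * N + 2)) ∧
      Admissible hEx θEx (Finset.Icc (-(2 * N + 3)) (2 * N + 3)) ∧
      muD hEx θEx (Finset.Icc (-(2 * N + 2)) (2 * N + 2)) hSub₁ =
        1 + (2 : ℝ) ^ (-N) / (2 * (N : ℝ) + 1) ∧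
      muD hEx θEx (Finset.Icc (-(2 * N + 2)) (2 * N + 2)) hSub₂ =
        1 + (2 : ℝ) ^ (-N - 1) / (2 * (N : ℝ) + 1) ∧
      muD hEx θEx (Finset.Icc (-(2 * N + 3)) (2 * N + 3)) hSub₁ =
        1 + (2 : ℝ) ^ (-N - 1) * ((1 - 2 * (N : ℝ)) / (4 * (N : ℝ) + 4)) ∧
      muD hEx θEx (Finset.Icc (-(2 * N + 3)) (2 * N + 3)) hSub₂ =
        1 + (2 : ℝ) ^ (-N - 2) * ((1 - 2 * (N : ℝ)) / (4 * (N : ℝ) + 4)) ∧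
      muD hEx θEx (Finset.Icc (-(2 * N + 2)) (2 * N + 2)) hSub₂ <
        muD hEx θEx (Finset.Icc (-(2 * N + 2)) (2 * N + 2)) hSub₁ ∧
      0 < muD hEx θEx (Finset.Icc (-(2 * N + 2)) (2 * N + 2)) hSub₂ ∧
      muD hEx θEx (Finset.Icc (-(2 * N + 3)) (2 * N + 3)) hSub₁ <
        muD hEx θEx (Finset.Icc (-(2 * N + 3)) (2 * N + 3)) hSub₂ ∧
      0 < muD hEx θEx (Finset.Icc (-(2 * N + 3)) (2 * N + 3)) hSub₁ := by
  have hset : {ρ : ℤ | θEx ρ < 0} = ({0, 1, 2} : Set ℤ) := by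
    ext r
    simp [Set.mem_setOf_eq, θEx_neg_iff]
  refine ⟨?_, hset, ?_, ?_, ?_, ?_⟩
  · constructor
    · rw [hset]
      exact (Set.finite_singleton 2).insert 1 |>.insert 0
    · apply Set.infinite_of_injective_forall_mem (f := fun n : ℕ => 2*(n:ℤ)+3)
      · intro a b hab; simp only at hab; omega
      · intro n
        simp only [Set.mem_setOf_eq]
        rw [θEx_odd_ge3 (by omega) ⟨n+1, by push_cast; ring⟩]
        exact zpow_pos (by norm_num) _
    · intro ρ hρ; simp [hEx] at hρ
    · exact (hasSum_congr' hasSum_F (fun r => by simp [hEx, FEx])).summable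
    · exact tv0
  · rw [muTheta, tv1, rk1]; norm_num
  · rw [muTheta, tv2, rk2]; norm_num
  · rw [muTheta, tv0, rk0]; norm_num
  · intro N hN
    have hNR : (1:ℝ) ≤ (N:ℝ) := by exact_mod_cast hN
    have ht : (0:ℝ) < (2:ℝ)^(-N) := zpow_pos (by norm_num) _
    have htle : (2:ℝ)^(-N) ≤ 1/2 := by
      have h := zpow_le_zpow_right₀ (one_le_two (α := ℝ)) (by omega : -N ≤ -1)
      rw [zpow_neg_one] at h
      norm_num at h ⊢
      linarith
    have hbE : (3:ℤ) ≤ 2*N+2 := by omega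
    have hbO : (3:ℤ) ≤ 2*N+3 := by omega
    -- power rewrites
    have e1 : (2:ℝ)^(-(N+1)) = (2:ℝ)^(-N)/2 := by
      rw [show -(N+1) = -N-1 by ring, zpow_sub₀ two_ne_zero, zpow_one]
    have e2 : (2:ℝ)^(-N-1) = (2:ℝ)^(-N)/2 := by
      rw [zpow_sub₀ two_ne_zero, zpow_one]
    have e3 : (2:ℝ)^(-N-2) = (2:ℝ)^(-N)/4 := by
      rw [zpow_sub₀ two_ne_zero]; norm_num
    -- SD values
    have hSDE : SD hEx θEx (Finset.Icc (-(2*N+2)) (2*N+2)) = (2:ℝ)^(-N) + (2:ℝ)^(-N) := by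
      rw [SD]
      exact tsum_notMem _ (fun r => (θEx r : ℝ) * (hEx r : ℝ))
        (hasSum_congr' (hE_F hN) (fun r => by
          by_cases h : r ∈ Finset.Icc (-(2*N+2)) (2*N+2) <;> simp [h, hEx, FEx]))
    have hSDO : SD hEx θEx (Finset.Icc (-(2*N+3)) (2*N+3)) = (2:ℝ)^(-N)/2 + (2:ℝ)^(-N) := by
      rw [SD, ← e1]
      exact tsum_notMem _ (fun r => (θEx r : ℝ) * (hEx r : ℝ))
        (hasSum_congr' (hO_F hN) (fun r => by
          by_cases h : r ∈ Finset.Icc (-(2*N+3)) (2*N+3) <;> simp [h, hEx, FEx]))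
    -- finset sums
    have hsE1 : ∑ ρ ∈ Finset.Icc (-(2*N+2)) (2*N+2), (θEx ρ : ℝ) * (hSub₁ ρ : ℝ)
        = -1 - (2:ℝ)^(-N) := sum_D _ _ hasSum_Fh1 (hE_F1 hN)
    have hsE2 : ∑ ρ ∈ Finset.Icc (-(2*N+2)) (2*N+2), (θEx ρ : ℝ) * (hSub₂ ρ : ℝ)
        = -2 - (2:ℝ)^(-N) := sum_D _ _ hasSum_Fh2 (hE_F2 hN)
    have hsO1 : ∑ ρ ∈ Finset.Icc (-(2*N+3)) (2*N+3), (θEx ρ : ℝ) * (hSub₁ ρ : ℝ)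
        = -1 - (2:ℝ)^(-N)/2 := by
      have h := sum_D _ _ hasSum_Fh1 (hO_F1 hN)
      rw [e1] at h
      exact h
    have hsO2 : ∑ ρ ∈ Finset.Icc (-(2*N+3)) (2*N+3), (θEx ρ : ℝ) * (hSub₂ ρ : ℝ)
        = -2 - (2:ℝ)^(-N)/2 := by
      have h := sum_D _ _ hasSum_Fh2 (hO_F2 hN)
      rw [e1] at h
      exact h
    -- muD equalities
    have hdE : ((dD θEx (Finset.Icc (-(2*N+2)) (2*N+2)) : ℕ) : ℝ) = 4*(N:ℝ)+2 := by
      rw [dD_Icc hbE]; push_cast; ring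
    have hdO : ((dD θEx (Finset.Icc (-(2*N+3)) (2*N+3)) : ℕ) : ℝ) = 4*(N:ℝ)+4 := by
      rw [dD_Icc hbO]; push_cast; ring
    have hcE1 : ∑ ρ ∈ DsubNeg θEx (Finset.Icc (-(2*N+2)) (2*N+2)),
        ((hSub₁ ρ : ℝ) / (hEx ρ : ℝ)) = 2*(N:ℝ) := by
      rw [count_Icc₁ hbE]; push_cast; ring
    have hcE2 : ∑ ρ ∈ DsubNeg θEx (Finset.Icc (-(2*N+2)) (2*N+2)),
        ((hSub₂ ρ : ℝ) / (hEx ρ : ℝ)) = 2*(N:ℝ) := by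
      rw [count_Icc₂ hbE]; push_cast; ring
    have hcO1 : ∑ ρ ∈ DsubNeg θEx (Finset.Icc (-(2*N+3)) (2*N+3)),
        ((hSub₁ ρ : ℝ) / (hEx ρ : ℝ)) = 2*(N:ℝ)+1 := by
      rw [count_Icc₁ hbO]; push_cast; ring
    have hcO2 : ∑ ρ ∈ DsubNeg θEx (Finset.Icc (-(2*N+3)) (2*N+3)),
        ((hSub₂ ρ : ℝ) / (hEx ρ : ℝ)) = 2*(N:ℝ)+1 := by
      rw [count_Icc₂ hbO]; push_cast; ring
    have hq0 : (4:ℝ) * (N:ℝ) + 2 ≠ 0 := by nlinarith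
    have hq1 : (2:ℝ) * (N:ℝ) + 1 ≠ 0 := by nlinarith
    have hq2 : (4:ℝ) * (N:ℝ) + 4 ≠ 0 := by nlinarith
    have mE1 : muD hEx θEx (Finset.Icc (-(2*N+2)) (2*N+2)) hSub₁
        = 1 + (2:ℝ)^(-N) / (2*(N:ℝ)+1) := by
      rw [muD, rk1, hSDE, hdE, hcE1, hsE1]
      generalize (2:ℝ)^(-N) = t
      field_simp
      ring
    have mE2 : muD hEx θEx (Finset.Icc (-(2*N+2)) (2*N+2)) hSub₂
        = 1 + (2:ℝ)^(-N)/2 / (2*(N:ℝ)+1) := by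
      rw [muD, rk2, hSDE, hdE, hcE2, hsE2]
      generalize (2:ℝ)^(-N) = t
      field_simp
      ring
    have mO1 : muD hEx θEx (Finset.Icc (-(2*N+3)) (2*N+3)) hSub₁
        = 1 + (2:ℝ)^(-N)/2 * ((1 - 2*(N:ℝ)) / (4*(N:ℝ)+4)) := by
      rw [muD, rk1, hSDO, hdO, hcO1, hsO1]
      generalize (2:ℝ)^(-N) = t
      field_simp
      ring
    have mO2 : muD hEx θEx (Finset.Icc (-(2*N+3)) (2*N+3)) hSub₂
        = 1 + (2:ℝ)^(-N)/4 * ((1 - 2*(N:ℝ)) / (4*(N:ℝ)+4)) := by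
      rw [muD, rk2, hSDO, hdO, hcO2, hsO2]
      generalize (2:ℝ)^(-N) = t
      field_simp
      ring
    have hu : (1 - 2*(N:ℝ)) / (4*(N:ℝ)+4) < 0 :=
      div_neg_of_neg_of_pos (by linarith) (by linarith)
    have hu2 : -(1/2 : ℝ) ≤ (1 - 2*(N:ℝ)) / (4*(N:ℝ)+4) := by
      rw [le_div_iff₀ (by linarith : (0:ℝ) < 4*(N:ℝ)+4)]
      linarith
    refine ⟨?_, ?_, ?_, ?_, ?_, ?_, ?_, ?_, ?_, ?_⟩
    · refine ⟨?_, ?_, ⟨-1, ?_, ?_⟩⟩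
      · intro ρ hρ
        rw [Set.mem_setOf_eq, θEx_neg_iff] at hρ
        rw [Finset.mem_coe, Finset.mem_Icc]
        omega
      · intro ρ _; simp [hEx]
      · rw [Finset.mem_Icc]; omega
      · rw [θEx_n1]; norm_num
    · refine ⟨?_, ?_, ⟨-1, ?_, ?_⟩⟩
      · intro ρ hρ
        rw [Set.mem_setOf_eq, θEx_neg_iff] at hρ
        rw [Finset.mem_coe, Finset.mem_Icc]
        omega
      · intro ρ _; simp [hEx]
      · rw [Finset.mem_Icc]; omega
      · rw [θEx_n1]; norm_num
    · exact mE1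
    · rw [mE2, e2]
    · rw [mO1, e2]
    · rw [mO2, e3]
    · rw [mE1, mE2]
      gcongr
      all_goals linarith
    · rw [mE2]
      have : 0 < (2:ℝ)^(-N)/2 / (2*(N:ℝ)+1) := div_pos (by positivity) (by linarith)
      linarith
    · rw [mO1, mO2]
      have := mul_lt_mul_of_neg_right
        (by linarith : (2:ℝ)^(-N)/4 < (2:ℝ)^(-N)/2) hu
      linarith
    · rw [mO1]
      have h5 : (2:ℝ)^(-N)/2 * (-(1/2)) ≤ (2:ℝ)^(-N)/2 * ((1 - 2*(N:ℝ)) / (4*(N:ℝ)+4)) :=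
        mul_le_mul_of_nonneg_left hu2 (by positivity)
      nlinarith
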